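/- Let b₁, b₂, σ₁, σ₂ : ℝ → ℝ be continuous functions with σ₁(u)² + σ₂(u)² > 0 for every u ∈ ℝ, let α(u) = (b₁(u) - b₂(u))/(√2 (σ₁(u)² + σ₂(u)²)), and let c > 0. Define h : ℝ² → ℝ by h(y) = 0 if y₁ = 0, and for y₁ ≠ 0 by h(y) = (1/√2)[(b₁(y₁/√2 + y₂) 𝟙_{y₁<0} + b₂(y₁/√2 + y₂) 𝟙_{y₁>0}) - (b₁(-y₁/√2 + y₂) 𝟙_{y₁>0} + b₂(-y₁/√2 + y₂) 𝟙_{y₁<0})] + sgn(y₁) φ(y₁/c) α(y₂) [σ₁(y₁/√2 + y₂)² + σ₂(-y₁/√2 + y₂)²]. Then h is continuous on all of ℝ²; in particular, for every y₂ ∈ ℝ, h(y₁, y₂) → 0 as y₁ → 0 through nonzero values. -/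

import Mathlib

noncomputable section

/-- `φ(u) = (1 - u²)⁴` for `|u| ≤ 1` and `φ(u) = 0` for `|u| > 1`. -/
def phi (u : ℝ) : ℝ := if |u| ≤ 1 then (1 - u^2)^4 else 0

/-- The sign function: `1` for positive, `-1` for negative, `0` at `0`. -/
def sgn (u : ℝ) : ℝ := if 0 < u then 1 else if u < 0 then -1 else 0

/-- `α(u) = (b₁(u) - b₂(u))/(√2 (σ₁(u)² + σ₂(u)²))`. -/
def alphaFn (b1 b2 s1 s2 : ℝ → ℝ) (u : ℝ) : ℝ :=
  (b1 u - b2 u) / (Real.sqrt 2 * ((s1 u)^2 + (s2 u)^2))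

/-- The drift-type function `h` of Statement 17: `h(y) = 0` for `y₁ = 0`, and for
`y₁ ≠ 0`,
`h(y) = (1/√2)[(b₁(y₁/√2+y₂)𝟙_{y₁<0} + b₂(y₁/√2+y₂)𝟙_{y₁>0})
              - (b₁(-y₁/√2+y₂)𝟙_{y₁>0} + b₂(-y₁/√2+y₂)𝟙_{y₁<0})]
       + sgn(y₁) φ(y₁/c) α(y₂) [σ₁(y₁/√2+y₂)² + σ₂(-y₁/√2+y₂)²]`. -/
def hFn (b1 b2 s1 s2 : ℝ → ℝ) (c : ℝ) (y : ℝ × ℝ) : ℝ :=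
  if y.1 = 0 then 0
  else
    (1 / Real.sqrt 2) *
        (((if y.1 < 0 then b1 (y.1 / Real.sqrt 2 + y.2) else 0)
            + (if 0 < y.1 then b2 (y.1 / Real.sqrt 2 + y.2) else 0))
          - ((if 0 < y.1 then b1 (-y.1 / Real.sqrt 2 + y.2) else 0)
            + (if y.1 < 0 then b2 (-y.1 / Real.sqrt 2 + y.2) else 0)))
      + sgn y.1 * phi (y.1 / c) * alphaFn b1 b2 s1 s2 y.2 *
          ((s1 (y.1 / Real.sqrt 2 + y.2))^2 + (s2 (-y.1 / Real.sqrt 2 + y.2))^2)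

/-! On each open half-plane `±y₁ > 0` the function `h` agrees with an expression that is
continuous on all of `ℝ²`. On the line `y₁ = 0` both expressions vanish: there `φ(0) = 1`,
and `α` is defined exactly so that `α(y₂)(σ₁(y₂)² + σ₂(y₂)²) = (b₁(y₂) - b₂(y₂))/√2`
cancels the drift difference. So `h` is the gluing of two continuous functions that agree
on the common frontier `y₁ = 0`, where `h` is `0` as well. -/

lemma continuous_phi : Continuous phi :=
  continuous_if_le continuous_abs continuous_const
    (by fun_prop : Continuous fun u : ℝ => (1 - u^2)^4).continuousOn
    continuousOn_const fun u hu => by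
      rw [← sq_abs, hu]
      norm_num

lemma phi_zero : phi 0 = 1 := by simp [phi]

section Branches

variable (b1 b2 s1 s2 : ℝ → ℝ) (c : ℝ)

def hFnCorr (y : ℝ × ℝ) : ℝ :=
  phi (y.1 / c) * alphaFn b1 b2 s1 s2 y.2 *
    ((s1 (y.1 / Real.sqrt 2 + y.2))^2 + (s2 (-y.1 / Real.sqrt 2 + y.2))^2)

def hFnRight (y : ℝ × ℝ) : ℝ :=
  (1 / Real.sqrt 2) * (b2 (y.1 / Real.sqrt 2 + y.2) - b1 (-y.1 / Real.sqrt 2 + y.2))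
    + hFnCorr b1 b2 s1 s2 c y

def hFnLeft (y : ℝ × ℝ) : ℝ :=
  (1 / Real.sqrt 2) * (b1 (y.1 / Real.sqrt 2 + y.2) - b2 (-y.1 / Real.sqrt 2 + y.2))
    - hFnCorr b1 b2 s1 s2 c y

lemma hFn_of_pos {y : ℝ × ℝ} (hy : 0 < y.1) :
    hFn b1 b2 s1 s2 c y = hFnRight b1 b2 s1 s2 c y := by
  simp only [hFn, hFnRight, hFnCorr, sgn, if_neg hy.ne', if_pos hy, if_neg hy.not_gt]
  ring

lemma hFn_of_neg {y : ℝ × ℝ} (hy : y.1 < 0) :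
    hFn b1 b2 s1 s2 c y = hFnLeft b1 b2 s1 s2 c y := by
  simp only [hFn, hFnLeft, hFnCorr, sgn, if_neg hy.ne, if_pos hy, if_neg hy.not_gt]
  ring

variable {b1 b2 s1 s2}

lemma alphaFn_mul_sq_add_sq (hell : ∀ u : ℝ, 0 < (s1 u)^2 + (s2 u)^2) (u : ℝ) :
    alphaFn b1 b2 s1 s2 u * ((s1 u)^2 + (s2 u)^2) = (b1 u - b2 u) / Real.sqrt 2 := by
  rw [alphaFn, div_mul_eq_mul_div, mul_div_mul_right _ _ (hell u).ne']

lemma hFnCorr_of_fst_eq_zero (hell : ∀ u : ℝ, 0 < (s1 u)^2 + (s2 u)^2) {y : ℝ × ℝ}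
    (hy : y.1 = 0) : hFnCorr b1 b2 s1 s2 c y = (b1 y.2 - b2 y.2) / Real.sqrt 2 := by
  simp only [hFnCorr, hy, zero_div, neg_zero, zero_add, phi_zero, one_mul,
    alphaFn_mul_sq_add_sq hell]

lemma hFnRight_of_fst_eq_zero (hell : ∀ u : ℝ, 0 < (s1 u)^2 + (s2 u)^2) {y : ℝ × ℝ}
    (hy : y.1 = 0) : hFnRight b1 b2 s1 s2 c y = 0 := by
  rw [hFnRight, hFnCorr_of_fst_eq_zero c hell hy, hy]
  simp only [zero_div, neg_zero, zero_add]
  ring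

lemma hFnLeft_of_fst_eq_zero (hell : ∀ u : ℝ, 0 < (s1 u)^2 + (s2 u)^2) {y : ℝ × ℝ}
    (hy : y.1 = 0) : hFnLeft b1 b2 s1 s2 c y = 0 := by
  rw [hFnLeft, hFnCorr_of_fst_eq_zero c hell hy, hy]
  simp only [zero_div, neg_zero, zero_add]
  ring

lemma hFn_eq_ite (hell : ∀ u : ℝ, 0 < (s1 u)^2 + (s2 u)^2) :
    hFn b1 b2 s1 s2 c =
      fun y => if y.1 ≤ 0 then hFnLeft b1 b2 s1 s2 c y else hFnRight b1 b2 s1 s2 c y := by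
  ext y
  rcases lt_trichotomy y.1 0 with hy | hy | hy
  · rw [if_pos hy.le, hFn_of_neg _ _ _ _ _ hy]
  · rw [if_pos hy.le, hFnLeft_of_fst_eq_zero c hell hy, hFn, if_pos hy]
  · rw [if_neg hy.not_ge, hFn_of_pos _ _ _ _ _ hy]

variable (hb1 : Continuous b1) (hb2 : Continuous b2) (hs1 : Continuous s1)
  (hs2 : Continuous s2) (hell : ∀ u : ℝ, 0 < (s1 u)^2 + (s2 u)^2)
include hb1 hb2 hs1 hs2 hell

lemma continuous_alphaFn : Continuous (alphaFn b1 b2 s1 s2) :=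
  (hb1.sub hb2).div (by fun_prop)
    fun u => (mul_pos (Real.sqrt_pos.mpr two_pos) (hell u)).ne'

lemma continuous_hFnCorr : Continuous (hFnCorr b1 b2 s1 s2 c) :=
  ((continuous_phi.comp (by fun_prop)).mul
    ((continuous_alphaFn hb1 hb2 hs1 hs2 hell).comp continuous_snd)).mul (by fun_prop)

lemma continuous_hFn : Continuous (hFn b1 b2 s1 s2 c) := by
  have hcorr := continuous_hFnCorr c hb1 hb2 hs1 hs2 hell
  rw [hFn_eq_ite c hell]
  refine continuous_if_le continuous_fst continuous_const
    (Continuous.continuousOn ?_) (Continuous.continuousOn ?_) fun y hy => ?_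
  · exact (by fun_prop : Continuous _).sub hcorr
  · exact (by fun_prop : Continuous _).add hcorr
  · rw [hFnLeft_of_fst_eq_zero c hell hy, hFnRight_of_fst_eq_zero c hell hy]

end Branches

theorem stmt_17_general (b1 b2 s1 s2 : ℝ → ℝ) (hb1 : Continuous b1) (hb2 : Continuous b2)
    (hs1 : Continuous s1) (hs2 : Continuous s2)
    (hell : ∀ u : ℝ, 0 < (s1 u)^2 + (s2 u)^2) (c : ℝ) :
    Continuous (hFn b1 b2 s1 s2 c) ∧
    ∀ y₂ : ℝ, Filter.Tendsto (fun y₁ : ℝ => hFn b1 b2 s1 s2 c (y₁, y₂))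
      (nhdsWithin 0 {(0 : ℝ)}ᶜ) (nhds 0) := by
  have hcont := continuous_hFn c hb1 hb2 hs1 hs2 hell
  refine ⟨hcont, fun y₂ => ?_⟩
  have hline : Continuous fun y₁ : ℝ => hFn b1 b2 s1 s2 c (y₁, y₂) := by fun_prop
  exact (hline.tendsto' 0 0 (by simp [hFn])).mono_left nhdsWithin_le_nhds

/-- If `b₁, b₂, σ₁, σ₂` are continuous with `σ₁² + σ₂² > 0` everywhere and `c > 0`,
then `h` is continuous on all of `ℝ²`; in particular, for every `y₂`,
`h(y₁, y₂) → 0` as `y₁ → 0` through nonzero values. -/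
theorem stmt_17 (b1 b2 s1 s2 : ℝ → ℝ) (hb1 : Continuous b1) (hb2 : Continuous b2)
    (hs1 : Continuous s1) (hs2 : Continuous s2)
    (hell : ∀ u : ℝ, 0 < (s1 u)^2 + (s2 u)^2) (c : ℝ) (hc : 0 < c) :
    Continuous (hFn b1 b2 s1 s2 c) ∧
    ∀ y₂ : ℝ, Filter.Tendsto (fun y₁ : ℝ => hFn b1 b2 s1 s2 c (y₁, y₂))
      (nhdsWithin 0 {(0 : ℝ)}ᶜ) (nhds 0) :=
  stmt_17_general b1 b2 s1 s2 hb1 hb2 hs1 hs2 hell c
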